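/- arXiv:2301.10873 — 2 statements merged into one kernel-verified Lean document; each statement's English description precedes it below -/
import Mathlib

section
/- Suppose the data (x,u) satisfy the standing data assumptions and let δ > 0 be such that T/δ is a positive integer. Then for every L ≥ 0: (a) Σ^δ(Q) ∩ N^L_{x,u} ⊆ Σ(Q + (1/2)δTL·I_n), and (b) Σ(Q) ∩ N^L_{x,u} ⊆ Σ^δ(Q + (1/2)δTL·I_n). Moreover, if the true noise signal w(t) = ẋ(t) − A_s x(t) − B_s u(t) satisfies V_0^T(w) ≤ (1/2)LT, then (A_s, B_s) ∈ Σ(Q) ∩ N^L_{x,u}, so in particular Σ(Q) ∩ N^L_{x,u} is nonempty. -/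
open MeasureTheory Matrix

noncomputable def opNorm {ι κ : Type} [Fintype ι] [Fintype κ] [DecidableEq κ]
    (M : Matrix ι κ ℝ) : ℝ :=
  ‖LinearMap.toContinuousLinearMap (Matrix.toEuclideanLin M)‖

noncomputable def euclNorm {ι : Type} [Fintype ι] (v : ι → ℝ) : ℝ :=
  Real.sqrt (∑ i, v i ^ 2)

/-- `v` is `L`-square Lipschitz on `[0,T]`. -/
def SqLipschitz {ι : Type} [Fintype ι] [DecidableEq ι] (T L : ℝ) (v : ℝ → ι → ℝ) : Prop :=
  ∀ t₁ ∈ Set.Icc (0:ℝ) T, ∀ t₂ ∈ Set.Icc (0:ℝ) T,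
    opNorm (Matrix.vecMulVec (v t₁) (v t₁) - Matrix.vecMulVec (v t₂) (v t₂)) ≤ L * |t₁ - t₂|

/-- The set of all partition sums appearing in the definition of total square variation. -/
def partitionSums {ι : Type} [Fintype ι] [DecidableEq ι] (T : ℝ) (v : ℝ → ι → ℝ) : Set ℝ :=
  { s | ∃ (N : ℕ) (t : Fin (N + 1) → ℝ), Monotone t ∧ t 0 = 0 ∧ t (Fin.last N) = T ∧
      s = ∑ i : Fin N, opNorm (Matrix.vecMulVec (v (t i.succ)) (v (t i.succ)) -
            Matrix.vecMulVec (v (t i.castSucc)) (v (t i.castSucc))) }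

/-- Total square variation `V_0^T(v)`. -/
noncomputable def totalSqVar {ι : Type} [Fintype ι] [DecidableEq ι] (T : ℝ) (v : ℝ → ι → ℝ) : ℝ :=
  sSup (partitionSums T v)

/-- `V_0^T(v) ≤ c`, phrased via all partition sums. -/
def TotalSqVarLE {ι : Type} [Fintype ι] [DecidableEq ι] (T : ℝ) (v : ℝ → ι → ℝ) (c : ℝ) : Prop :=
  ∀ s ∈ partitionSums T v, s ≤ c

/-- Loewner order `M ≤ N`. -/
def loewnerLE {ι : Type} [Fintype ι] (M N : Matrix ι ι ℝ) : Prop := (N - M).PosSemidef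

/-- Strict Loewner order `M < N`. -/
def loewnerLT {ι : Type} [Fintype ι] (M N : Matrix ι ι ℝ) : Prop := (N - M).PosDef

/-- `M` is negative definite. -/
def negDefQ {ι : Type} [Fintype ι] (M : Matrix ι ι ℝ) : Prop := (-M).PosDef

/-- Entrywise Lebesgue integral of a matrix-valued function on `[0,T]`. -/
noncomputable def matIntegral {ι κ : Type} (T : ℝ) (f : ℝ → Matrix ι κ ℝ) : Matrix ι κ ℝ :=
  Matrix.of fun i j => ∫ t in Set.Ioc (0:ℝ) T, f t i j

/-- `δ • Σ_{k<N} v(kδ) v(kδ)ᵀ`. -/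
noncomputable def sampledGram {ι : Type} [Fintype ι] (δ : ℝ) (N : ℕ) (v : ℝ → ι → ℝ) :
    Matrix ι ι ℝ :=
  δ • ∑ k ∈ Finset.range N, Matrix.vecMulVec (v (k * δ)) (v (k * δ))

/-- The noise signal `ẋ − Ax − Bu` associated with a candidate system `(A,B)`. -/
def noiseSig {n m : ℕ} (xdot x : ℝ → Fin n → ℝ) (u : ℝ → Fin m → ℝ)
    (A : Matrix (Fin n) (Fin n) ℝ) (B : Matrix (Fin n) (Fin m) ℝ) : ℝ → Fin n → ℝ :=
  fun t => xdot t - A.mulVec (x t) - B.mulVec (u t)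

/-- `Σ(Q')`: systems consistent with the continuous-time data. -/
def SigmaCont {n m : ℕ} (T : ℝ) (xdot x : ℝ → Fin n → ℝ) (u : ℝ → Fin m → ℝ)
    (Q' : Matrix (Fin n) (Fin n) ℝ) :
    Set (Matrix (Fin n) (Fin n) ℝ × Matrix (Fin n) (Fin m) ℝ) :=
  { AB | loewnerLE (matIntegral T fun t =>
      Matrix.vecMulVec (noiseSig xdot x u AB.1 AB.2 t) (noiseSig xdot x u AB.1 AB.2 t)) Q' }

/-- `Σ^δ(Q')`: systems consistent with the data sampled at stepsize `δ` (with `N = T/δ` samples). -/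
def SigmaDisc {n m : ℕ} (δ : ℝ) (N : ℕ) (xdot x : ℝ → Fin n → ℝ) (u : ℝ → Fin m → ℝ)
    (Q' : Matrix (Fin n) (Fin n) ℝ) :
    Set (Matrix (Fin n) (Fin n) ℝ × Matrix (Fin n) (Fin m) ℝ) :=
  { AB | loewnerLE (sampledGram δ N (noiseSig xdot x u AB.1 AB.2)) Q' }

/-- `M^L_{x,u}`: systems whose associated noise is `L`-square Lipschitz. -/
def Mset {n m : ℕ} (T L : ℝ) (xdot x : ℝ → Fin n → ℝ) (u : ℝ → Fin m → ℝ) :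
    Set (Matrix (Fin n) (Fin n) ℝ × Matrix (Fin n) (Fin m) ℝ) :=
  { AB | SqLipschitz T L (noiseSig xdot x u AB.1 AB.2) }

/-- `N^L_{x,u}`: systems whose associated noise has total square variation at most `LT/2`. -/
def Nset {n m : ℕ} (T L : ℝ) (xdot x : ℝ → Fin n → ℝ) (u : ℝ → Fin m → ℝ) :
    Set (Matrix (Fin n) (Fin n) ℝ × Matrix (Fin n) (Fin m) ℝ) :=
  { AB | TotalSqVarLE T (noiseSig xdot x u AB.1 AB.2) (L * T / 2) }

/-- The stacked signal `ξ(t) = (ẋ(t); −x(t); −u(t))`. -/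
def xiSig {n m : ℕ} (xdot x : ℝ → Fin n → ℝ) (u : ℝ → Fin m → ℝ) (t : ℝ) :
    (Fin n ⊕ (Fin n ⊕ Fin m)) → ℝ :=
  Sum.elim (xdot t) (Sum.elim (fun i => -(x t i)) (fun j => -(u t j)))

/-- The block matrix `[[Q + βI, P, PKᵀ], [P, 0, 0], [KP, 0, 0]]`. -/
noncomputable def lmiBlock {n m : ℕ} (Q P : Matrix (Fin n) (Fin n) ℝ)
    (K : Matrix (Fin m) (Fin n) ℝ) (β : ℝ) :
    Matrix (Fin n ⊕ (Fin n ⊕ Fin m)) (Fin n ⊕ (Fin n ⊕ Fin m)) ℝ :=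
  Matrix.fromBlocks (Q + β • (1 : Matrix (Fin n) (Fin n) ℝ))
    (Matrix.of fun i jj => Sum.elim (fun j => P i j) (fun j => (P * K.transpose) i j) jj)
    (Matrix.of fun ii j => Sum.elim (fun i => P i j) (fun k => (K * P) k j) ii)
    0

/-- The continuous-data LMI. -/
def ContLMI {n m : ℕ} (T : ℝ) (xdot x : ℝ → Fin n → ℝ) (u : ℝ → Fin m → ℝ)
    (Q P : Matrix (Fin n) (Fin n) ℝ) (K : Matrix (Fin m) (Fin n) ℝ) (β : ℝ) : Prop :=
  (matIntegral T (fun t => Matrix.vecMulVec (xiSig xdot x u t) (xiSig xdot x u t)) -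
    lmiBlock Q P K β).PosSemidef

/-- The sampled-data LMI at stepsize `δ` (with `N = T/δ` samples). -/
def SampLMI {n m : ℕ} (δ : ℝ) (N : ℕ) (xdot x : ℝ → Fin n → ℝ) (u : ℝ → Fin m → ℝ)
    (Q P : Matrix (Fin n) (Fin n) ℝ) (K : Matrix (Fin m) (Fin n) ℝ) (β : ℝ) : Prop :=
  (sampledGram δ N (xiSig xdot x u) - lmiBlock Q P K β).PosSemidef

/-! On a sampling cell `[kδ, (k+1)δ]` the quadratic form `t ↦ yᵀ w(t) w(t)ᵀ y` stays within
`‖y‖²` times the oscillation of `w wᵀ` on the cell of its value at `kδ`, so the integral over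
the cell and its left Riemann sum differ by at most `δ ‖y‖²` times that oscillation.
Interleaving the grid with near-maximisers of the oscillations gives a partition of `[0, T]`,
so the oscillations add up to at most the total square variation `LT/2`. Hence, for a noise
in `N^L_{x,u}`, the continuous-time and the sampled Gram matrices lie within `δ LT/2 · I` of
each other in the Loewner order, which gives both inclusions. -/

open scoped Matrix.Norms.L2Operator RealInnerProductSpace
open Set

section OpNorm

variable {ι : Type} [Fintype ι] [DecidableEq ι]

lemma opNorm_eq_norm (A : Matrix ι ι ℝ) : opNorm A = ‖A‖ := rfl

lemma abs_dotProduct_mulVec_le (A : Matrix ι ι ℝ) (x y : EuclideanSpace ℝ ι) :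
    |x.ofLp ⬝ᵥ A *ᵥ y.ofLp| ≤ ‖A‖ * ‖x‖ * ‖y‖ := by
  rw [← inner_toEuclideanCLM]
  calc |⟪x, toEuclideanCLM (𝕜 := ℝ) A y⟫| ≤ ‖x‖ * ‖toEuclideanCLM (𝕜 := ℝ) A y‖ :=
        abs_real_inner_le_norm _ _
    _ ≤ ‖x‖ * (‖A‖ * ‖y‖) := by
        gcongr; exact (toEuclideanCLM (n := ι) (𝕜 := ℝ) A).le_opNorm y
    _ = ‖A‖ * ‖x‖ * ‖y‖ := by ring

lemma abs_dotProduct_mulVec_self_le (A : Matrix ι ι ℝ) (y : ι → ℝ) :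
    |y ⬝ᵥ A *ᵥ y| ≤ ‖A‖ * (y ⬝ᵥ y) := by
  have h := abs_dotProduct_mulVec_le A (WithLp.toLp 2 y) (WithLp.toLp 2 y)
  rw [mul_assoc, ← sq, EuclideanSpace.norm_sq_eq] at h
  simpa [dotProduct, sq] using h

lemma abs_apply_le_norm (A : Matrix ι ι ℝ) (i j : ι) : |A i j| ≤ ‖A‖ := by
  simpa using abs_dotProduct_mulVec_le A (EuclideanSpace.single i 1) (EuclideanSpace.single j 1)

end OpNorm

lemma Finset.sum_range_two_mul {M : Type*} [AddCommMonoid M] (N : ℕ) (f : ℕ → M) :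
    ∑ i ∈ range (2 * N), f i = ∑ k ∈ range N, (f (2 * k) + f (2 * k + 1)) := by
  induction N with
  | zero => simp
  | succ N ih => rw [Nat.mul_succ, sum_range_succ, sum_range_succ, ih, sum_range_succ, add_assoc]

namespace TotalSqVarLE

variable {ι : Type} [Fintype ι] [DecidableEq ι] {T c : ℝ} {W : ℝ → ι → ℝ}

lemma sum_range_le (hv : TotalSqVarLE T W c) (q : ℕ → ℝ) (K : ℕ)
    (hq : ∀ i < K, q i ≤ q (i + 1)) (hq0 : q 0 = 0) (hqK : q K = T) :
    ∑ i ∈ Finset.range K,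
      ‖vecMulVec (W (q (i + 1))) (W (q (i + 1))) - vecMulVec (W (q i)) (W (q i))‖ ≤ c := by
  have h := hv _ ⟨K, fun i => q i, Fin.monotone_iff_le_succ.2 fun i => hq i i.isLt, hq0, hqK, rfl⟩
  simp only [opNorm_eq_norm, Fin.val_succ, Fin.val_castSucc] at h
  rwa [Fin.sum_univ_eq_sum_range (fun i => ‖vecMulVec (W (q (i + 1))) (W (q (i + 1))) -
    vecMulVec (W (q i)) (W (q i))‖)] at h

lemma norm_sub_le (hv : TotalSqVarLE T W c) {s t : ℝ} (hs : 0 ≤ s) (hst : s ≤ t) (ht : t ≤ T) :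
    ‖vecMulVec (W t) (W t) - vecMulVec (W s) (W s)‖ ≤ c := by
  let q : ℕ → ℝ := fun i => if i = 0 then 0 else if i = 1 then s else if i = 2 then t else T
  have h := hv.sum_range_le q 3 (fun i hi => by interval_cases i <;> simpa [q]) rfl rfl
  simp only [Finset.sum_range_succ, Finset.sum_range_zero, q] at h
  norm_num at h
  linarith [norm_nonneg (vecMulVec (W s) (W s) - vecMulVec (W 0) (W 0)),
    norm_nonneg (vecMulVec (W T) (W T) - vecMulVec (W t) (W t))]

lemma sum_norm_sub_grid_le (hv : TotalSqVarLE T W c) {δ : ℝ} {N : ℕ} (hTN : T = N * δ)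
    (τ : ℕ → ℝ) (hτ : ∀ k < N, τ k ∈ Icc (k * δ) ((k + 1) * δ)) :
    ∑ k ∈ Finset.range N,
      ‖vecMulVec (W (τ k)) (W (τ k)) - vecMulVec (W (k * δ)) (W (k * δ))‖ ≤ c := by
  -- the partition `0 ≤ τ 0 ≤ δ ≤ τ 1 ≤ 2δ ≤ ⋯ ≤ Nδ = T`
  let q : ℕ → ℝ := fun j => if Even j then ((j / 2 : ℕ) : ℝ) * δ else τ (j / 2)
  have hq_even (k : ℕ) : q (2 * k) = k * δ := by simp [q]
  have hq_odd (k : ℕ) : q (2 * k + 1) = τ k := by simp [q, Nat.add_div]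
  have hmono : ∀ j < 2 * N, q j ≤ q (j + 1) := by
    intro j hj
    rcases Nat.even_or_odd' j with ⟨k, rfl | rfl⟩
    · rw [hq_even, hq_odd]; exact (hτ k (by omega)).1
    · rw [show 2 * k + 1 + 1 = 2 * (k + 1) by ring, hq_even, hq_odd]
      exact_mod_cast (hτ k (by omega)).2
  have h := hv.sum_range_le q (2 * N) hmono (by simpa using hq_even 0) (by rw [hq_even, hTN])
  rw [Finset.sum_range_two_mul] at h
  refine le_trans (Finset.sum_le_sum fun k _ => ?_) h
  rw [hq_even, hq_odd]
  exact le_add_of_nonneg_right (norm_nonneg _)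

end TotalSqVarLE

section RealIntegral

lemma abs_setIntegral_Ioc_sub_le {q : ℝ → ℝ} {a b B : ℝ} (hab : a ≤ b)
    (hq : IntegrableOn q (Ioc a b)) (hB : ∀ t ∈ Ioc a b, |q t - q a| ≤ B) :
    |(∫ t in Ioc a b, q t) - (b - a) * q a| ≤ (b - a) * B := by
  have hconst : (b - a) * q a = ∫ _ in Ioc a b, q a := by
    rw [setIntegral_const, Real.volume_real_Ioc_of_le hab, smul_eq_mul]
  rw [hconst, ← integral_sub hq (integrable_const _)]
  have h := norm_setIntegral_le_of_norm_le_const (μ := volume) measure_Ioc_lt_top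
    fun t ht => (Real.norm_eq_abs _).trans_le (hB t ht)
  rwa [Real.norm_eq_abs, Real.volume_real_Ioc_of_le hab, mul_comm] at h

lemma setIntegral_Ioc_eq_sum_grid {q : ℝ → ℝ} {δ : ℝ} (hδ : 0 ≤ δ) (N : ℕ)
    (hq : IntegrableOn q (Ioc 0 (N * δ))) :
    ∫ t in Ioc 0 (N * δ), q t = ∑ k ∈ Finset.range N, ∫ t in Ioc (k * δ) ((k + 1) * δ), q t := by
  have hgrid (k : ℕ) : (k : ℝ) * δ ≤ ((k + 1 : ℕ) : ℝ) * δ := by gcongr; simp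
  have hsub {k : ℕ} (hk : k < N) : Ioc ((k : ℝ) * δ) ((k + 1 : ℕ) * δ) ⊆ Ioc 0 (N * δ) :=
    Ioc_subset_Ioc (by positivity) (by gcongr; exact_mod_cast hk)
  have h := intervalIntegral.sum_integral_adjacent_intervals (a := fun k : ℕ => (k : ℝ) * δ)
    fun k hk => (intervalIntegrable_iff_integrableOn_Ioc_of_le (hgrid k)).2 (hq.mono_set (hsub hk))
  simp only [Nat.cast_zero, zero_mul] at h
  rw [← intervalIntegral.integral_of_le (by positivity), ← h]
  refine Finset.sum_congr rfl fun k _ => ?_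
  rw [intervalIntegral.integral_of_le (hgrid k), Nat.cast_succ]

end RealIntegral

lemma isHermitian_matIntegral_vecMulVec {ι : Type} (T : ℝ) (W : ℝ → ι → ℝ) :
    (matIntegral T fun t => vecMulVec (W t) (W t)).IsHermitian := by
  ext i j
  simp only [conjTranspose_apply, star_trivial, matIntegral, of_apply, vecMulVec_apply, mul_comm]

section MatrixIntegral

variable {ι : Type} [Fintype ι]

lemma integrable_dotProduct_mulVec {μ : Measure ℝ} {M : ℝ → Matrix ι ι ℝ}
    (hM : ∀ i j, Integrable (fun t => M t i j) μ) (x y : ι → ℝ) :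
    Integrable (fun t => x ⬝ᵥ M t *ᵥ y) μ := by
  simp only [dotProduct, mulVec, Finset.mul_sum]
  exact integrable_finsetSum _ fun i _ => integrable_finsetSum _ fun j _ =>
    ((hM i j).mul_const (y j)).const_mul (x i)

lemma dotProduct_mulVec_matIntegral {T : ℝ} {M : ℝ → Matrix ι ι ℝ}
    (hM : ∀ i j, IntegrableOn (fun t => M t i j) (Ioc 0 T)) (x y : ι → ℝ) :
    x ⬝ᵥ matIntegral T M *ᵥ y = ∫ t in Ioc 0 T, x ⬝ᵥ M t *ᵥ y := by
  simp only [matIntegral, dotProduct, mulVec, of_apply, Finset.mul_sum]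
  rw [integral_finsetSum _ fun i _ => integrable_finsetSum _ fun j _ =>
    ((hM i j).mul_const (y j)).const_mul (x i)]
  refine Finset.sum_congr rfl fun i _ => ?_
  rw [integral_finsetSum _ fun j _ => ((hM i j).mul_const (y j)).const_mul (x i)]
  simp only [integral_const_mul, integral_mul_const]

lemma dotProduct_mulVec_sampledGram (δ : ℝ) (N : ℕ) (W : ℝ → ι → ℝ) (y : ι → ℝ) :
    y ⬝ᵥ sampledGram δ N W *ᵥ y =
      ∑ k ∈ Finset.range N, δ * (y ⬝ᵥ vecMulVec (W (k * δ)) (W (k * δ)) *ᵥ y) := by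
  rw [sampledGram, smul_mulVec, dotProduct_smul, sum_mulVec, dotProduct_sum, smul_eq_mul,
    Finset.mul_sum]

lemma isHermitian_sampledGram (δ : ℝ) (N : ℕ) (W : ℝ → ι → ℝ) :
    (sampledGram δ N W).IsHermitian := by
  ext i j
  simp only [sampledGram, conjTranspose_apply, star_trivial, Matrix.smul_apply, Matrix.sum_apply,
    vecMulVec_apply, mul_comm]

end MatrixIntegral

section Oscillation

variable {ι : Type} [Fintype ι] [DecidableEq ι] {T c : ℝ} {W : ℝ → ι → ℝ}

noncomputable def sqOsc (W : ℝ → ι → ℝ) (a b : ℝ) : ℝ :=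
  sSup ((fun t => ‖vecMulVec (W t) (W t) - vecMulVec (W a) (W a)‖) '' Icc a b)

lemma norm_sub_le_sqOsc (hv : TotalSqVarLE T W c) {a b t : ℝ} (ha : 0 ≤ a) (hb : b ≤ T)
    (ht : t ∈ Icc a b) : ‖vecMulVec (W t) (W t) - vecMulVec (W a) (W a)‖ ≤ sqOsc W a b := by
  refine le_csSup ⟨c, ?_⟩ (mem_image_of_mem _ ht)
  rintro _ ⟨s, hs, rfl⟩
  exact hv.norm_sub_le ha hs.1 (hs.2.trans hb)

lemma sum_sqOsc_le (hv : TotalSqVarLE T W c) {δ : ℝ} (hδ : 0 ≤ δ) {N : ℕ} (hTN : T = N * δ) :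
    ∑ k ∈ Finset.range N, sqOsc W (k * δ) ((k + 1) * δ) ≤ c := by
  refine le_of_forall_pos_le_add fun ε hε => ?_
  have hε' : 0 < ε / (N + 1) := by positivity
  have hnear (k : ℕ) : ∃ t ∈ Icc ((k : ℝ) * δ) ((k + 1) * δ),
      sqOsc W (k * δ) ((k + 1) * δ) - ε / (N + 1) <
        ‖vecMulVec (W t) (W t) - vecMulVec (W (k * δ)) (W (k * δ))‖ := by
    have hne : (Icc ((k : ℝ) * δ) ((k + 1) * δ)).Nonempty :=
      nonempty_Icc.2 (mul_le_mul_of_nonneg_right (by linarith) hδ)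
    obtain ⟨_, ⟨t, ht, rfl⟩, hlt⟩ := exists_lt_of_lt_csSup (hne.image
      fun t => ‖vecMulVec (W t) (W t) - vecMulVec (W (k * δ)) (W (k * δ))‖)
      (sub_lt_self (sqOsc W (k * δ) ((k + 1) * δ)) hε')
    exact ⟨t, ht, hlt⟩
  choose τ hτ hτlt using hnear
  have hN : (N : ℝ) * (ε / (N + 1)) ≤ ε := by
    rw [mul_div_assoc', div_le_iff₀ (by positivity)]; nlinarith
  calc ∑ k ∈ Finset.range N, sqOsc W (k * δ) ((k + 1) * δ)
      ≤ ∑ k ∈ Finset.range N, (‖vecMulVec (W (τ k)) (W (τ k)) -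
          vecMulVec (W (k * δ)) (W (k * δ))‖ + ε / (N + 1)) :=
        Finset.sum_le_sum fun k _ => (sub_lt_iff_lt_add.1 (hτlt k)).le
    _ = ∑ k ∈ Finset.range N, ‖vecMulVec (W (τ k)) (W (τ k)) -
          vecMulVec (W (k * δ)) (W (k * δ))‖ + N * (ε / (N + 1)) := by
        rw [Finset.sum_add_distrib, Finset.sum_const, Finset.card_range, nsmul_eq_mul]
    _ ≤ c + ε := add_le_add (hv.sum_norm_sub_grid_le hTN τ fun k _ => hτ k) hN

end Oscillation

section SamplingError

variable {ι : Type} [Fintype ι] [DecidableEq ι] {T c : ℝ} {W : ℝ → ι → ℝ}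

lemma integrableOn_vecMulVec_apply (hW : AEStronglyMeasurable W (volume.restrict (Ioc 0 T)))
    (hv : TotalSqVarLE T W c) (i j : ι) :
    IntegrableOn (fun t => vecMulVec (W t) (W t) i j) (Ioc 0 T) := by
  refine Integrable.mono' (integrable_const (‖vecMulVec (W 0) (W 0)‖ + c)) ?_ ?_
  · simp only [vecMulVec_apply]
    exact ((continuous_apply i).comp_aestronglyMeasurable hW).mul
      ((continuous_apply j).comp_aestronglyMeasurable hW)
  · refine (ae_restrict_iff' measurableSet_Ioc).2 (.of_forall fun t ht => ?_)
    calc ‖vecMulVec (W t) (W t) i j‖ ≤ ‖vecMulVec (W t) (W t)‖ := abs_apply_le_norm _ i j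
      _ ≤ ‖vecMulVec (W 0) (W 0)‖ + ‖vecMulVec (W t) (W t) - vecMulVec (W 0) (W 0)‖ :=
        norm_le_norm_add_norm_sub' _ _
      _ ≤ ‖vecMulVec (W 0) (W 0)‖ + c := by
        gcongr; exact hv.norm_sub_le le_rfl ht.1.le ht.2

theorem abs_dotProduct_mulVec_matIntegral_sub_sampledGram_le {δ : ℝ} (hδ : 0 ≤ δ) {N : ℕ}
    (hTN : T = N * δ) (hW : AEStronglyMeasurable W (volume.restrict (Ioc 0 T)))
    (hv : TotalSqVarLE T W c) (y : ι → ℝ) :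
    |y ⬝ᵥ (matIntegral T fun t => vecMulVec (W t) (W t)) *ᵥ y - y ⬝ᵥ sampledGram δ N W *ᵥ y| ≤
      δ * c * (y ⬝ᵥ y) := by
  subst hTN
  set q : ℝ → ℝ := fun t => y ⬝ᵥ vecMulVec (W t) (W t) *ᵥ y
  have hY : 0 ≤ y ⬝ᵥ y := Finset.sum_nonneg fun i _ => mul_self_nonneg (y i)
  have hint := integrableOn_vecMulVec_apply hW hv
  have hq : IntegrableOn q (Ioc 0 (N * δ)) := integrable_dotProduct_mulVec hint y y
  have hcell : ∀ k ∈ Finset.range N, |(∫ t in Ioc (k * δ) ((k + 1) * δ), q t) - δ * q (k * δ)| ≤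
      δ * (sqOsc W (k * δ) ((k + 1) * δ) * (y ⬝ᵥ y)) := by
    intro k hk
    have hkN : (k : ℝ) + 1 ≤ N := by exact_mod_cast Finset.mem_range.1 hk
    have hb : (k + 1) * δ ≤ N * δ := mul_le_mul_of_nonneg_right hkN hδ
    have hab : (k : ℝ) * δ ≤ (k + 1) * δ := mul_le_mul_of_nonneg_right (by linarith) hδ
    have hosc : ∀ t ∈ Ioc ((k : ℝ) * δ) ((k + 1) * δ),
        |q t - q (k * δ)| ≤ sqOsc W (k * δ) ((k + 1) * δ) * (y ⬝ᵥ y) := by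
      intro t ht
      have hqt : q t - q (k * δ) =
          y ⬝ᵥ (vecMulVec (W t) (W t) - vecMulVec (W (k * δ)) (W (k * δ))) *ᵥ y := by
        simp only [q, sub_mulVec, dotProduct_sub]
      rw [hqt]
      exact (abs_dotProduct_mulVec_self_le _ y).trans <| mul_le_mul_of_nonneg_right
        (norm_sub_le_sqOsc hv (by positivity) hb ⟨ht.1.le, ht.2⟩) hY
    have h := abs_setIntegral_Ioc_sub_le hab (hq.mono_set (Ioc_subset_Ioc (by positivity) hb)) hosc
    rwa [show (k + 1) * δ - k * δ = δ by ring] at h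
  rw [dotProduct_mulVec_matIntegral hint, setIntegral_Ioc_eq_sum_grid hδ N hq,
    dotProduct_mulVec_sampledGram, ← Finset.sum_sub_distrib]
  calc _ ≤ ∑ k ∈ Finset.range N, δ * (sqOsc W (k * δ) ((k + 1) * δ) * (y ⬝ᵥ y)) :=
        (Finset.abs_sum_le_sum_abs _ _).trans (Finset.sum_le_sum hcell)
    _ = δ * (y ⬝ᵥ y) * ∑ k ∈ Finset.range N, sqOsc W (k * δ) ((k + 1) * δ) := by
        rw [Finset.mul_sum]; exact Finset.sum_congr rfl fun k _ => by ring
    _ ≤ δ * (y ⬝ᵥ y) * c := by gcongr; exact sum_sqOsc_le hv hδ rfl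
    _ = δ * c * (y ⬝ᵥ y) := by ring

end SamplingError

section Loewner

variable {ι : Type} [Fintype ι] [DecidableEq ι]

lemma loewnerLE_add_smul_one_of_dotProduct_mulVec_le {G H Q : Matrix ι ι ℝ} {β : ℝ}
    (hG : G.IsHermitian) (hH : H.IsHermitian) (hGQ : loewnerLE G Q)
    (hHG : ∀ y, y ⬝ᵥ H *ᵥ y ≤ y ⬝ᵥ G *ᵥ y + β * (y ⬝ᵥ y)) :
    loewnerLE H (Q + β • 1) := by
  have hsplit : Q + β • 1 - H = (Q - G) + (G + β • 1 - H) := by abel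
  unfold loewnerLE at hGQ ⊢
  rw [hsplit]
  refine hGQ.add (.of_dotProduct_mulVec_nonneg
    ((hG.add (isHermitian_one.smul (IsSelfAdjoint.all β))).sub hH) fun y => ?_)
  simp only [star_trivial, sub_mulVec, add_mulVec, smul_mulVec, one_mulVec, dotProduct_sub,
    dotProduct_add, dotProduct_smul, smul_eq_mul]
  linarith [hHG y]

end Loewner

section Signals

variable {ι : Type} [Fintype ι]

lemma aestronglyMeasurable_of_eq_primitive {T : ℝ} (hT : 0 ≤ T) {x xdot : ℝ → ι → ℝ}
    (hxdot : IntegrableOn xdot (Icc 0 T))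
    (hx : ∀ t ∈ Icc 0 T, ∀ i, x t i = x 0 i + ∫ s in (0 : ℝ)..t, xdot s i) :
    AEStronglyMeasurable x (volume.restrict (Icc 0 T)) := by
  refine ContinuousOn.aestronglyMeasurable (continuousOn_pi.2 fun i => ?_) measurableSet_Icc
  have hprim := intervalIntegral.continuousOn_primitive_interval (a := 0) (b := T)
    (by rw [uIcc_of_le hT]; exact hxdot.eval i)
  rw [uIcc_of_le hT] at hprim
  exact (continuousOn_const.add hprim).congr fun t ht => hx t ht i

lemma aestronglyMeasurable_noiseSig {n m : ℕ} {μ : Measure ℝ} {xdot x : ℝ → Fin n → ℝ}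
    {u : ℝ → Fin m → ℝ} (hxdot : AEStronglyMeasurable xdot μ) (hx : AEStronglyMeasurable x μ)
    (hu : AEStronglyMeasurable u μ) (A : Matrix (Fin n) (Fin n) ℝ)
    (B : Matrix (Fin n) (Fin m) ℝ) :
    AEStronglyMeasurable (noiseSig xdot x u A B) μ :=
  (hxdot.sub ((continuous_const.matrix_mulVec continuous_id).comp_aestronglyMeasurable hx)).sub
    ((continuous_const.matrix_mulVec continuous_id).comp_aestronglyMeasurable hu)

end Signals

theorem stmt10_general
    {n m : ℕ} (T : ℝ)
    (x xdot : ℝ → Fin n → ℝ) (u : ℝ → Fin m → ℝ)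
    (Q : Matrix (Fin n) (Fin n) ℝ)
    (hxdotL2 : MeasureTheory.MemLp xdot 2 (MeasureTheory.volume.restrict (Set.Icc (0:ℝ) T)))
    (huL2 : MeasureTheory.MemLp u 2 (MeasureTheory.volume.restrict (Set.Icc (0:ℝ) T)))
    (hAC : ∀ t ∈ Set.Icc (0:ℝ) T, ∀ i, x t i = x 0 i + ∫ s in (0:ℝ)..t, xdot s i)
    (As : Matrix (Fin n) (Fin n) ℝ) (Bs : Matrix (Fin n) (Fin m) ℝ)
    (htrue : (As, Bs) ∈ SigmaCont T xdot x u Q)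
    (δ : ℝ) (hδ : 0 < δ) (N : ℕ) (hTN : T = N * δ)
    :
    ∀ L : ℝ, 0 ≤ L →
      (SigmaDisc δ N xdot x u Q ∩ Nset T L xdot x u ⊆
        SigmaCont T xdot x u (Q + (δ * T * L / 2) • (1 : Matrix (Fin n) (Fin n) ℝ))) ∧
      (SigmaCont T xdot x u Q ∩ Nset T L xdot x u ⊆
        SigmaDisc δ N xdot x u (Q + (δ * T * L / 2) • (1 : Matrix (Fin n) (Fin n) ℝ))) ∧
      (TotalSqVarLE T (noiseSig xdot x u As Bs) (L * T / 2) →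
        (As, Bs) ∈ SigmaCont T xdot x u Q ∩ Nset T L xdot x u) := by
  intro L _
  have hx := aestronglyMeasurable_of_eq_primitive (by rw [hTN]; positivity)
    (hxdotL2.integrable (by norm_num)) hAC
  have hsample : ∀ AB ∈ Nset T L xdot x u, ∀ y,
      |y ⬝ᵥ (matIntegral T fun t => vecMulVec (noiseSig xdot x u AB.1 AB.2 t)
          (noiseSig xdot x u AB.1 AB.2 t)) *ᵥ y -
        y ⬝ᵥ sampledGram δ N (noiseSig xdot x u AB.1 AB.2) *ᵥ y| ≤
        δ * T * L / 2 * (y ⬝ᵥ y) := fun AB hAB y => by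
    rw [show δ * T * L / 2 = δ * (L * T / 2) by ring]
    refine abs_dotProduct_mulVec_matIntegral_sub_sampledGram_le hδ.le hTN ?_ hAB y
    exact (aestronglyMeasurable_noiseSig hxdotL2.1 hx huL2.1 _ _).mono_measure
      (Measure.restrict_mono Ioc_subset_Icc_self le_rfl)
  refine ⟨?_, ?_, fun hvar => ⟨htrue, hvar⟩⟩
  · rintro AB ⟨hdisc, hAB⟩
    exact loewnerLE_add_smul_one_of_dotProduct_mulVec_le (isHermitian_sampledGram _ _ _)
      (isHermitian_matIntegral_vecMulVec _ _) hdisc fun y => by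
        linarith [abs_le.1 (hsample AB hAB y)]
  · rintro AB ⟨hcont, hAB⟩
    exact loewnerLE_add_smul_one_of_dotProduct_mulVec_le (isHermitian_matIntegral_vecMulVec _ _)
      (isHermitian_sampledGram _ _ _) hcont fun y => by
        linarith [abs_le.1 (hsample AB hAB y)]

theorem stmt10
    {n m : ℕ} (T : ℝ) (hT : 0 < T)
    (x xdot : ℝ → Fin n → ℝ) (u : ℝ → Fin m → ℝ)
    (Q : Matrix (Fin n) (Fin n) ℝ) (hQ : Q.PosSemidef)
    (hxdotL2 : MeasureTheory.MemLp xdot 2 (MeasureTheory.volume.restrict (Set.Icc (0:ℝ) T)))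
    (huL2 : MeasureTheory.MemLp u 2 (MeasureTheory.volume.restrict (Set.Icc (0:ℝ) T)))
    (hAC : ∀ t ∈ Set.Icc (0:ℝ) T, ∀ i, x t i = x 0 i + ∫ s in (0:ℝ)..t, xdot s i)
    (As : Matrix (Fin n) (Fin n) ℝ) (Bs : Matrix (Fin n) (Fin m) ℝ)
    (htrue : (As, Bs) ∈ SigmaCont T xdot x u Q)
    (δ : ℝ) (hδ : 0 < δ) (N : ℕ) (hN : 0 < N) (hTN : T = N * δ)
    :
    ∀ L : ℝ, 0 ≤ L →
      (SigmaDisc δ N xdot x u Q ∩ Nset T L xdot x u ⊆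
        SigmaCont T xdot x u (Q + (δ * T * L / 2) • (1 : Matrix (Fin n) (Fin n) ℝ))) ∧
      (SigmaCont T xdot x u Q ∩ Nset T L xdot x u ⊆
        SigmaDisc δ N xdot x u (Q + (δ * T * L / 2) • (1 : Matrix (Fin n) (Fin n) ℝ))) ∧
      (TotalSqVarLE T (noiseSig xdot x u As Bs) (L * T / 2) →
        (As, Bs) ∈ SigmaCont T xdot x u Q ∩ Nset T L xdot x u) :=
  stmt10_general T x xdot u Q hxdotL2 huL2 hAC As Bs htrue δ hδ N hTN
end

section
/- Suppose the data (x,u) satisfy the standing data assumptions, let δ > 0 be such that T/δ is a positive integer, and let L ≥ 0. Suppose there exist K ∈ ℝ^{m×n}, a symmetric positive definite P ∈ ℝ^{n×n}, and β > (1/2)δTL such that the sampled-data LMI at stepsize δ holds. Then (A+BK)P + P(A+BK)^T is negative definite for every (A,B) ∈ Σ(Q) ∩ M^L_{x,u}, and also for every (A,B) ∈ Σ(Q) ∩ N^L_{x,u}. -/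
open MeasureTheory Matrix

/-!
Test the sampled LMI against the vector `(z, Aᵀz, Bᵀz)`. There the quadratic form of the block
matrix is `zᵀ(Q + βI)z + zᵀ((A+BK)P + P(A+BK)ᵀ)z`, while the sampled Gram matrix of `ξ` gives the
left Riemann sum `δ Σₖ (w(kδ)·z)²` of the noise `w = ẋ − Ax − Bu`. For `(A,B) ∈ Σ(Q)` the integral
`∫ (w·z)²` is at most `zᵀQz`, so it suffices that the Riemann sum exceeds the integral by less than
`β|z|²`.

On the cell `[kδ, (k+1)δ]` this defect is `∫ (f(kδ) − f)` with `f = (w·z)²`, and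
`f(kδ) − f(t) ≤ ‖w(t)w(t)ᵀ − w(kδ)w(kδ)ᵀ‖ |z|²`. Square-Lipschitz noise bounds each cell by
`L|z|²δ²/2`. Under bounded square variation, the first moment method bounds each cell by `δ|z|²`
times a single increment `‖w(sₖ)w(sₖ)ᵀ − w(kδ)w(kδ)ᵀ‖` with `sₖ` in the cell, and these increments
sum to at most `LT/2` along the partition `0 ≤ s₀ ≤ δ ≤ s₁ ≤ ⋯ ≤ Nδ = T`. In both cases the total
defect is at most `δTL/2 · |z|² < β|z|²`.
-/

section QuadraticForms

variable {ι : Type} [Fintype ι]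

lemma abs_dotProduct_mulVec_le_opNorm [DecidableEq ι] (M : Matrix ι ι ℝ) (z : ι → ℝ) :
    |z ⬝ᵥ M *ᵥ z| ≤ opNorm M * (z ⬝ᵥ z) := by
  set z' : EuclideanSpace ℝ ι := WithLp.toLp 2 z
  have hquad : z ⬝ᵥ M *ᵥ z = inner ℝ z' (Matrix.toEuclideanLin M z') := by
    rw [EuclideanSpace.inner_eq_star_dotProduct, dotProduct_comm]
    rfl
  have hnorm : z ⬝ᵥ z = ‖z'‖ ^ 2 := by
    rw [← real_inner_self_eq_norm_sq, EuclideanSpace.inner_eq_star_dotProduct]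
    rfl
  rw [hquad, hnorm, sq, ← mul_assoc]
  exact (abs_real_inner_le_norm _ _).trans <| by
    rw [mul_comm ‖z'‖]
    gcongr
    exact (LinearMap.toContinuousLinearMap (Matrix.toEuclideanLin M)).le_opNorm z'

lemma sq_dotProduct_sub_sq_le [DecidableEq ι] (a b z : ι → ℝ) :
    (a ⬝ᵥ z) ^ 2 - (b ⬝ᵥ z) ^ 2 ≤ opNorm (vecMulVec b b - vecMulVec a a) * (z ⬝ᵥ z) := by
  have hquad : z ⬝ᵥ (vecMulVec b b - vecMulVec a a) *ᵥ z = (b ⬝ᵥ z) ^ 2 - (a ⬝ᵥ z) ^ 2 := by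
    simp only [sub_mulVec, vecMulVec_mulVec, dotProduct_sub, dotProduct_smul]
    simp [dotProduct_comm z, sq]
  have := abs_dotProduct_mulVec_le_opNorm (vecMulVec b b - vecMulVec a a) z
  rw [hquad] at this
  linarith [neg_abs_le ((b ⬝ᵥ z) ^ 2 - (a ⬝ᵥ z) ^ 2)]

lemma dotProduct_sampledGram_mulVec (δ : ℝ) (N : ℕ) (v : ℝ → ι → ℝ) (z : ι → ℝ) :
    z ⬝ᵥ sampledGram δ N v *ᵥ z = δ * ∑ k ∈ Finset.range N, (v (k * δ) ⬝ᵥ z) ^ 2 := by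
  simp only [sampledGram, smul_mulVec, dotProduct_smul, sum_mulVec, dotProduct_sum,
    vecMulVec_mulVec]
  simp [dotProduct_comm z, sq]

end QuadraticForms

section Integrability

variable {ι : Type} [Fintype ι]

lemma memLp_of_eq_primitive {T : ℝ} (hT : 0 ≤ T) {x xdot : ℝ → ι → ℝ}
    (hxdot : IntegrableOn xdot (Set.Icc 0 T))
    (hAC : ∀ t ∈ Set.Icc (0:ℝ) T, ∀ i, x t i = x 0 i + ∫ s in (0:ℝ)..t, xdot s i)
    (p : ENNReal) : MemLp x p (volume.restrict (Set.Icc 0 T)) := by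
  let g : ℝ → ι → ℝ := fun t i => x 0 i + ∫ s in (0:ℝ)..t, xdot s i
  have hg : ContinuousOn g (Set.Icc 0 T) := by
    refine continuousOn_pi.2 fun i => continuousOn_const.add ?_
    rw [← Set.uIcc_of_le hT]
    exact intervalIntegral.continuousOn_primitive_interval
      (by rw [Set.uIcc_of_le hT]; exact hxdot.eval i)
  obtain ⟨C, hC⟩ := isCompact_Icc.exists_bound_of_continuousOn hg
  have hgp : MemLp g p (volume.restrict (Set.Icc 0 T)) :=
    MemLp.of_bound (hg.aestronglyMeasurable measurableSet_Icc) C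
      ((ae_restrict_iff' measurableSet_Icc).2 (.of_forall hC))
  refine hgp.ae_eq ((ae_restrict_iff' measurableSet_Icc).2 (.of_forall fun t ht => ?_))
  exact funext fun i => (hAC t ht i).symm

lemma noiseSig_memLp {n m : ℕ} {T : ℝ} (hT : 0 ≤ T) {x xdot : ℝ → Fin n → ℝ}
    {u : ℝ → Fin m → ℝ} (hxdot : MemLp xdot 2 (volume.restrict (Set.Icc 0 T)))
    (hu : MemLp u 2 (volume.restrict (Set.Icc 0 T)))
    (hAC : ∀ t ∈ Set.Icc (0:ℝ) T, ∀ i, x t i = x 0 i + ∫ s in (0:ℝ)..t, xdot s i)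
    (A : Matrix (Fin n) (Fin n) ℝ) (B : Matrix (Fin n) (Fin m) ℝ) :
    MemLp (noiseSig xdot x u A B) 2 (volume.restrict (Set.Icc 0 T)) := by
  have hx := memLp_of_eq_primitive hT (hxdot.integrable one_le_two) hAC 2
  exact (hxdot.sub ((mulVecLin A).toContinuousLinearMap.comp_memLp' hx)).sub
    ((mulVecLin B).toContinuousLinearMap.comp_memLp' hu)

lemma integrable_sq_dotProduct {μ : Measure ℝ} {v : ℝ → ι → ℝ}
    (hv : MemLp v 2 μ) (z : ι → ℝ) : Integrable (fun t => (v t ⬝ᵥ z) ^ 2) μ :=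
  MemLp.integrable_sq (memLp_finsetSum _ fun i _ => (hv.eval i).mul_const (z i))

lemma dotProduct_matIntegral_mulVec {T : ℝ} {v : ℝ → ι → ℝ}
    (hv : MemLp v 2 (volume.restrict (Set.Ioc 0 T))) (z : ι → ℝ) :
    z ⬝ᵥ matIntegral T (fun t => vecMulVec (v t) (v t)) *ᵥ z
      = ∫ t in Set.Ioc 0 T, (v t ⬝ᵥ z) ^ 2 := by
  have hint (i j : ι) : Integrable (fun t => z i * (v t i * v t j * z j))
      (volume.restrict (Set.Ioc 0 T)) :=
    (((hv.eval i).integrable_mul (hv.eval j)).mul_const (z j)).const_mul (z i)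
  calc _ = ∑ i, ∑ j, ∫ t in Set.Ioc 0 T, z i * (v t i * v t j * z j) := by
        simp only [dotProduct, mulVec, matIntegral, of_apply, vecMulVec_apply, Finset.mul_sum]
        refine Finset.sum_congr rfl fun i _ => Finset.sum_congr rfl fun j _ => ?_
        rw [integral_const_mul, integral_mul_const]
    _ = ∫ t in Set.Ioc 0 T, ∑ i, ∑ j, z i * (v t i * v t j * z j) := by
        rw [integral_finsetSum _ fun i _ => integrable_finsetSum _ fun j _ => hint i j]
        exact Finset.sum_congr rfl fun i _ => (integral_finsetSum _ fun j _ => hint i j).symm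
    _ = _ := by
        congr 1
        ext t
        rw [sq, dotProduct, Finset.sum_mul_sum]
        exact Finset.sum_congr rfl fun i _ => Finset.sum_congr rfl fun j _ => by ring

end Integrability

section Sampling

lemma Icc_cell_subset {δ : ℝ} (hδ : 0 ≤ δ) {N k : ℕ} (hk : k < N) :
    Set.Icc (k * δ) ((k + 1) * δ) ⊆ Set.Icc 0 (N * δ) := by
  have hk' : (k : ℝ) + 1 ≤ N := by exact_mod_cast hk
  exact Set.Icc_subset_Icc (by positivity) (by nlinarith)

lemma intervalIntegrable_cell {f : ℝ → ℝ} {δ : ℝ} (hδ : 0 ≤ δ) {N k : ℕ}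
    (hf : IntegrableOn f (Set.Ioc 0 (N * δ))) (hk : k < N) :
    IntervalIntegrable f volume (k * δ) ((k + 1) * δ) := by
  have hk' : (k : ℝ) + 1 ≤ N := by exact_mod_cast hk
  rw [intervalIntegrable_iff_integrableOn_Ioc_of_le (by nlinarith)]
  exact hf.mono_set (Set.Ioc_subset_Ioc (by positivity) (by nlinarith))

lemma riemannSum_sub_integral_eq_sum {f : ℝ → ℝ} {δ : ℝ} (hδ : 0 ≤ δ) {N : ℕ}
    (hf : IntegrableOn f (Set.Ioc 0 (N * δ))) :
    δ * ∑ k ∈ Finset.range N, f (k * δ) - ∫ t in Set.Ioc 0 (N * δ), f t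
      = ∑ k ∈ Finset.range N, ∫ t in (k * δ)..((k + 1) * δ), (f (k * δ) - f t) := by
  have hcells := intervalIntegral.sum_integral_adjacent_intervals (a := fun k : ℕ => k * δ)
    (n := N) fun k hk => by exact_mod_cast intervalIntegrable_cell hδ hf hk
  push_cast at hcells
  rw [zero_mul] at hcells
  rw [← intervalIntegral.integral_of_le (by positivity), ← hcells, Finset.mul_sum,
    ← Finset.sum_sub_distrib]
  refine Finset.sum_congr rfl fun k hk => ?_
  rw [intervalIntegral.integral_sub intervalIntegrable_const
    (intervalIntegrable_cell hδ hf (Finset.mem_range.1 hk)), intervalIntegral.integral_const,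
    smul_eq_mul]
  ring

lemma exists_intervalIntegral_le_mul {g : ℝ → ℝ} {a b : ℝ} (hab : a < b)
    (hg : IntervalIntegrable g volume a b) :
    ∃ s ∈ Set.Icc a b, ∫ t in a..b, g t ≤ (b - a) * g s := by
  have hvol : volume.real (Set.Ioc a b) = b - a := Real.volume_real_Ioc_of_le hab.le
  obtain ⟨s, hs, hle⟩ := exists_setAverage_le (μ := volume) (by simp [hab])
    (by simp) ((intervalIntegrable_iff_integrableOn_Ioc_of_le hab.le).1 hg)
  refine ⟨s, Set.Ioc_subset_Icc_self hs, ?_⟩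
  rw [setAverage_eq, hvol, smul_eq_mul, inv_mul_le_iff₀ (by linarith)] at hle
  rwa [intervalIntegral.integral_of_le hab.le]

end Sampling

section SquareLipschitz

variable {ι : Type} [Fintype ι] [DecidableEq ι] {T δ L : ℝ} {N : ℕ} {v : ℝ → ι → ℝ}

lemma SqLipschitz.riemannSum_sub_integral_le (hv : SqLipschitz T L v) (hδ : 0 < δ)
    (hTN : T = N * δ) (z : ι → ℝ) (hf : IntegrableOn (fun t => (v t ⬝ᵥ z) ^ 2) (Set.Ioc 0 T)) :
    δ * ∑ k ∈ Finset.range N, (v (k * δ) ⬝ᵥ z) ^ 2 - ∫ t in Set.Ioc 0 T, (v t ⬝ᵥ z) ^ 2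
      ≤ δ * T * L / 2 * (z ⬝ᵥ z) := by
  subst hTN
  rw [riemannSum_sub_integral_eq_sum hδ.le hf]
  have hcell : ∀ k < N, ∫ t in (k * δ)..((k + 1) * δ), ((v (k * δ) ⬝ᵥ z) ^ 2 - (v t ⬝ᵥ z) ^ 2)
      ≤ L * (z ⬝ᵥ z) * (δ ^ 2 / 2) := by
    intro k hk
    have hab : (k : ℝ) * δ ≤ (k + 1) * δ := by nlinarith
    have hlin : ∫ t in (k * δ)..((k + 1) * δ), L * (z ⬝ᵥ z) * (t - k * δ)
        = L * (z ⬝ᵥ z) * (δ ^ 2 / 2) := by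
      rw [intervalIntegral.integral_const_mul, intervalIntegral.integral_comp_sub_right
        (fun t => t), integral_id]
      ring
    rw [← hlin]
    refine intervalIntegral.integral_mono_on hab
      (intervalIntegrable_const.sub (intervalIntegrable_cell hδ.le hf hk))
      ((by fun_prop : Continuous _).intervalIntegrable _ _) fun t ht => ?_
    have hkt := hv t (Icc_cell_subset hδ.le hk ht) (k * δ)
      (Icc_cell_subset hδ.le hk ⟨le_rfl, hab⟩)
    rw [abs_of_nonneg (sub_nonneg.2 ht.1)] at hkt
    calc (v (k * δ) ⬝ᵥ z) ^ 2 - (v t ⬝ᵥ z) ^ 2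
        ≤ opNorm (vecMulVec (v t) (v t) - vecMulVec (v (k * δ)) (v (k * δ))) * (z ⬝ᵥ z) :=
          sq_dotProduct_sub_sq_le _ _ _
      _ ≤ L * (t - k * δ) * (z ⬝ᵥ z) := by gcongr; exact dotProduct_self_star_nonneg z
      _ = L * (z ⬝ᵥ z) * (t - k * δ) := by ring
  calc _ ≤ ∑ _k ∈ Finset.range N, L * (z ⬝ᵥ z) * (δ ^ 2 / 2) :=
        Finset.sum_le_sum fun k hk => hcell k (Finset.mem_range.1 hk)
    _ = δ * (N * δ) * L / 2 * (z ⬝ᵥ z) := by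
      rw [Finset.sum_const, Finset.card_range, nsmul_eq_mul]
      ring

end SquareLipschitz

section TotalVariation

variable {ι : Type} [Fintype ι] [DecidableEq ι] {T δ L c : ℝ} {N : ℕ} {v : ℝ → ι → ℝ}

lemma TotalSqVarLE.sum_le (hv : TotalSqVarLE T v c) {M : ℕ} {p : ℕ → ℝ}
    (hp : ∀ j < M, p j ≤ p (j + 1)) (h0 : p 0 = 0) (hM : p M = T) :
    ∑ j ∈ Finset.range M,
      opNorm (vecMulVec (v (p (j + 1))) (v (p (j + 1))) - vecMulVec (v (p j)) (v (p j))) ≤ c :=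
  hv _ ⟨M, fun i => p i, Fin.monotone_iff_le_succ.2 fun i => hp i i.2, h0, hM,
    Finset.sum_range fun j => opNorm (vecMulVec (v (p (j + 1))) (v (p (j + 1))) -
      vecMulVec (v (p j)) (v (p j)))⟩

lemma TotalSqVarLE.sum_le_of_mem_cells (hv : TotalSqVarLE T v c) (hTN : T = N * δ)
    {s : ℕ → ℝ} (hs : ∀ k < N, s k ∈ Set.Icc (k * δ) ((k + 1) * δ)) :
    ∑ k ∈ Finset.range N,
      opNorm (vecMulVec (v (s k)) (v (s k)) - vecMulVec (v (k * δ)) (v (k * δ))) ≤ c := by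
  -- the partition `0 ≤ s 0 ≤ δ ≤ s 1 ≤ 2δ ≤ ⋯ ≤ s (N-1) ≤ Nδ = T`
  let p : ℕ → ℝ := fun j => if Even j then (j / 2 : ℕ) * δ else s (j / 2)
  have hp_even (k : ℕ) : p (2 * k) = k * δ := by simp [p]
  have hp_odd (k : ℕ) : p (2 * k + 1) = s k := by
    simp [p, show (2 * k + 1) / 2 = k by omega]
  let term (j : ℕ) :=
    opNorm (vecMulVec (v (p (j + 1))) (v (p (j + 1))) - vecMulVec (v (p j)) (v (p j)))
  have hstep : ∀ j < 2 * N, p j ≤ p (j + 1) := by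
    intro j hj
    obtain ⟨k, rfl | rfl⟩ := Nat.even_or_odd' j
    · rw [hp_even, hp_odd]
      exact (hs k (by omega)).1
    · rw [show 2 * k + 1 + 1 = 2 * (k + 1) by ring, hp_even, hp_odd]
      exact_mod_cast (hs k (by omega)).2
  calc _ = ∑ j ∈ (Finset.range N).image (2 * ·), term j := by
        rw [Finset.sum_image fun a _ b _ h => by simpa using h]
        simp only [term, hp_even, hp_odd]
    _ ≤ ∑ j ∈ Finset.range (2 * N), term j :=
        Finset.sum_le_sum_of_subset_of_nonneg (fun j => by
          simp only [Finset.mem_image, Finset.mem_range, forall_exists_index, and_imp]; omega)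
          fun j _ _ => norm_nonneg _
    _ ≤ c := hv.sum_le hstep (by simpa using hp_even 0) (by rw [hp_even, hTN])

lemma TotalSqVarLE.riemannSum_sub_integral_le (hv : TotalSqVarLE T v (L * T / 2)) (hδ : 0 < δ)
    (hTN : T = N * δ) (z : ι → ℝ) (hf : IntegrableOn (fun t => (v t ⬝ᵥ z) ^ 2) (Set.Ioc 0 T)) :
    δ * ∑ k ∈ Finset.range N, (v (k * δ) ⬝ᵥ z) ^ 2 - ∫ t in Set.Ioc 0 T, (v t ⬝ᵥ z) ^ 2
      ≤ δ * T * L / 2 * (z ⬝ᵥ z) := by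
  have hcell (k : ℕ) : ∃ s, k < N → s ∈ Set.Icc (k * δ) ((k + 1) * δ) ∧
      ∫ t in (k * δ)..((k + 1) * δ), ((v (k * δ) ⬝ᵥ z) ^ 2 - (v t ⬝ᵥ z) ^ 2)
        ≤ δ * ((v (k * δ) ⬝ᵥ z) ^ 2 - (v s ⬝ᵥ z) ^ 2) := by
    by_cases hk : k < N
    · obtain ⟨s, hs, hle⟩ := exists_intervalIntegral_le_mul (by linarith)
        (intervalIntegrable_const.sub (intervalIntegrable_cell hδ.le (hTN ▸ hf) hk))
      exact ⟨s, fun _ => ⟨hs, by rwa [show ((k : ℝ) + 1) * δ - k * δ = δ by ring] at hle⟩⟩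
    · exact ⟨0, fun h => absurd h hk⟩
  choose s hs using hcell
  have hvar := hv.sum_le_of_mem_cells hTN fun k hk => (hs k hk).1
  rw [hTN] at hf ⊢
  rw [riemannSum_sub_integral_eq_sum hδ.le hf]
  calc _ ≤ ∑ k ∈ Finset.range N, δ * ((v (k * δ) ⬝ᵥ z) ^ 2 - (v (s k) ⬝ᵥ z) ^ 2) :=
        Finset.sum_le_sum fun k hk => (hs k (Finset.mem_range.1 hk)).2
    _ ≤ ∑ k ∈ Finset.range N, δ * (opNorm (vecMulVec (v (s k)) (v (s k)) -
          vecMulVec (v (k * δ)) (v (k * δ))) * (z ⬝ᵥ z)) :=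
        Finset.sum_le_sum fun k _ => by gcongr; exact sq_dotProduct_sub_sq_le _ _ _
    _ = δ * (z ⬝ᵥ z) * ∑ k ∈ Finset.range N, opNorm (vecMulVec (v (s k)) (v (s k)) -
          vecMulVec (v (k * δ)) (v (k * δ))) := by
        rw [Finset.mul_sum]
        exact Finset.sum_congr rfl fun k _ => by ring
    _ ≤ δ * (z ⬝ᵥ z) * (L * T / 2) := by
        gcongr
        exact mul_nonneg hδ.le (dotProduct_self_star_nonneg z)
    _ = _ := by rw [hTN]; ring

end TotalVariation

section SampledLMI

variable {n m : ℕ}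

lemma xiSig_dotProduct (xdot x : ℝ → Fin n → ℝ) (u : ℝ → Fin m → ℝ)
    (A : Matrix (Fin n) (Fin n) ℝ) (B : Matrix (Fin n) (Fin m) ℝ) (z : Fin n → ℝ) (t : ℝ) :
    xiSig xdot x u t ⬝ᵥ Sum.elim z (Sum.elim (Aᵀ *ᵥ z) (Bᵀ *ᵥ z))
      = noiseSig xdot x u A B t ⬝ᵥ z := by
  simp only [xiSig, noiseSig, sumElim_dotProduct_sumElim, sub_dotProduct, dotProduct_mulVec,
    vecMul_transpose]
  rw [show (fun i => -x t i) = -x t from rfl, show (fun j => -u t j) = -u t from rfl,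
    mulVec_neg, mulVec_neg, neg_dotProduct, neg_dotProduct]
  ring

lemma dotProduct_lmiBlock_mulVec (Q P : Matrix (Fin n) (Fin n) ℝ) (K : Matrix (Fin m) (Fin n) ℝ)
    (β : ℝ) (A : Matrix (Fin n) (Fin n) ℝ) (B : Matrix (Fin n) (Fin m) ℝ) (z : Fin n → ℝ) :
    let w := Sum.elim z (Sum.elim (Aᵀ *ᵥ z) (Bᵀ *ᵥ z))
    w ⬝ᵥ lmiBlock Q P K β *ᵥ w
      = z ⬝ᵥ Q *ᵥ z + β * (z ⬝ᵥ z) + z ⬝ᵥ ((A + B * K) * P + P * (A + B * K)ᵀ) *ᵥ z := by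
  intro w
  have hrow : (Matrix.of fun i jj => Sum.elim (fun j => P i j) (fun j => (P * Kᵀ) i j) jj)
      *ᵥ Sum.elim (Aᵀ *ᵥ z) (Bᵀ *ᵥ z) = P *ᵥ Aᵀ *ᵥ z + (P * Kᵀ) *ᵥ Bᵀ *ᵥ z := by
    ext i
    simp only [mulVec, dotProduct, of_apply, Fintype.sum_sum_type, Sum.elim_inl, Sum.elim_inr,
      Pi.add_apply]
  have hcol : (Matrix.of fun ii j => Sum.elim (fun i => P i j) (fun k => (K * P) k j) ii)
      *ᵥ z = Sum.elim (P *ᵥ z) ((K * P) *ᵥ z) := by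
    ext (i | k) <;> rfl
  simp only [w, lmiBlock, fromBlocks_mulVec, Sum.elim_comp_inl, Sum.elim_comp_inr, hrow, hcol,
    zero_mulVec, add_zero, sumElim_dotProduct_sumElim]
  have hA : (Aᵀ *ᵥ z) ⬝ᵥ P *ᵥ z = z ⬝ᵥ (A * P) *ᵥ z := by
    rw [mulVec_transpose, ← dotProduct_mulVec, mulVec_mulVec]
  have hB : (Bᵀ *ᵥ z) ⬝ᵥ (K * P) *ᵥ z = z ⬝ᵥ (B * (K * P)) *ᵥ z := by
    rw [mulVec_transpose, ← dotProduct_mulVec, mulVec_mulVec]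
  simp only [hA, hB, add_mulVec, smul_mulVec, one_mulVec, mulVec_mulVec, dotProduct_add,
    dotProduct_smul, smul_eq_mul, transpose_add, transpose_mul, add_mul, mul_add, Matrix.mul_assoc]
  ring

lemma negDefQ_of_sampLMI {δ β D : ℝ} {N : ℕ} {xdot x : ℝ → Fin n → ℝ}
    {u : ℝ → Fin m → ℝ} {Q P : Matrix (Fin n) (Fin n) ℝ} {K : Matrix (Fin m) (Fin n) ℝ}
    {A : Matrix (Fin n) (Fin n) ℝ} {B : Matrix (Fin n) (Fin m) ℝ}
    (hP : P.IsHermitian) (hlmi : SampLMI δ N xdot x u Q P K β) (hD : D < β)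
    (hsamp : ∀ z, δ * ∑ k ∈ Finset.range N, (noiseSig xdot x u A B (k * δ) ⬝ᵥ z) ^ 2
      ≤ z ⬝ᵥ Q *ᵥ z + D * (z ⬝ᵥ z)) :
    negDefQ ((A + B * K) * P + P * (A + B * K)ᵀ) := by
  have hPt : Pᵀ = P := hP
  refine posDef_iff_dotProduct_mulVec.2 ⟨?_, fun z hz => ?_⟩
  · change (-_)ᵀ = _
    simp only [transpose_neg, transpose_add, transpose_mul, transpose_transpose, hPt, add_comm]
  have hzz : 0 < z ⬝ᵥ z := dotProduct_self_star_pos_iff.2 hz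
  let w := Sum.elim z (Sum.elim (Aᵀ *ᵥ z) (Bᵀ *ᵥ z))
  have hw := (posSemidef_iff_dotProduct_mulVec.1 hlmi).2 w
  have hgram : w ⬝ᵥ sampledGram δ N (xiSig xdot x u) *ᵥ w
      = δ * ∑ k ∈ Finset.range N, (noiseSig xdot x u A B (k * δ) ⬝ᵥ z) ^ 2 := by
    simp only [w, dotProduct_sampledGram_mulVec, xiSig_dotProduct]
  change 0 ≤ w ⬝ᵥ (_ - _) *ᵥ w at hw
  rw [sub_mulVec, dotProduct_sub, hgram, dotProduct_lmiBlock_mulVec] at hw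
  change 0 < z ⬝ᵥ -_ *ᵥ z
  rw [neg_mulVec, dotProduct_neg]
  linarith [hsamp z, mul_lt_mul_of_pos_right hD hzz]

end SampledLMI

theorem stmt11_general
    {n m : ℕ} (T : ℝ) (hT : 0 < T)
    (x xdot : ℝ → Fin n → ℝ) (u : ℝ → Fin m → ℝ)
    (Q : Matrix (Fin n) (Fin n) ℝ)
    (hxdotL2 : MeasureTheory.MemLp xdot 2 (MeasureTheory.volume.restrict (Set.Icc (0:ℝ) T)))
    (huL2 : MeasureTheory.MemLp u 2 (MeasureTheory.volume.restrict (Set.Icc (0:ℝ) T)))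
    (hAC : ∀ t ∈ Set.Icc (0:ℝ) T, ∀ i, x t i = x 0 i + ∫ s in (0:ℝ)..t, xdot s i)
    (δ : ℝ) (hδ : 0 < δ) (N : ℕ) (hTN : T = N * δ)
    (L : ℝ)
    (K : Matrix (Fin m) (Fin n) ℝ) (P : Matrix (Fin n) (Fin n) ℝ) (β : ℝ)
    (hP : P.PosDef) (hβ : δ * T * L / 2 < β)
    (hlmi : SampLMI δ N xdot x u Q P K β) :
    (∀ AB ∈ SigmaCont T xdot x u Q ∩ Mset T L xdot x u, negDefQ ((AB.1 + AB.2 * K) * P + P * (AB.1 + AB.2 * K).transpose)) ∧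
    (∀ AB ∈ SigmaCont T xdot x u Q ∩ Nset T L xdot x u, negDefQ ((AB.1 + AB.2 * K) * P + P * (AB.1 + AB.2 * K).transpose)) := by
  have key : ∀ AB ∈ SigmaCont T xdot x u Q, (∀ z,
      IntegrableOn (fun t => (noiseSig xdot x u AB.1 AB.2 t ⬝ᵥ z) ^ 2) (Set.Ioc 0 T) →
      δ * ∑ k ∈ Finset.range N, (noiseSig xdot x u AB.1 AB.2 (k * δ) ⬝ᵥ z) ^ 2
        - ∫ t in Set.Ioc 0 T, (noiseSig xdot x u AB.1 AB.2 t ⬝ᵥ z) ^ 2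
        ≤ δ * T * L / 2 * (z ⬝ᵥ z)) →
      negDefQ ((AB.1 + AB.2 * K) * P + P * (AB.1 + AB.2 * K)ᵀ) := by
    rintro ⟨A, B⟩ hsys hdefect
    have hv := (noiseSig_memLp hT.le hxdotL2 huL2 hAC A B).mono_measure
      (Measure.restrict_mono Set.Ioc_subset_Icc_self le_rfl)
    refine negDefQ_of_sampLMI hP.1 hlmi hβ fun z => ?_
    have hcont := (posSemidef_iff_dotProduct_mulVec.1 hsys).2 z
    rw [star_trivial, sub_mulVec, dotProduct_sub, dotProduct_matIntegral_mulVec hv] at hcont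
    linarith [hdefect z (integrable_sq_dotProduct hv z)]
  exact ⟨fun AB hAB => key AB hAB.1 (hAB.2.riemannSum_sub_integral_le hδ hTN),
    fun AB hAB => key AB hAB.1 (hAB.2.riemannSum_sub_integral_le hδ hTN)⟩

theorem stmt11
    {n m : ℕ} (T : ℝ) (hT : 0 < T)
    (x xdot : ℝ → Fin n → ℝ) (u : ℝ → Fin m → ℝ)
    (Q : Matrix (Fin n) (Fin n) ℝ) (hQ : Q.PosSemidef)
    (hxdotL2 : MeasureTheory.MemLp xdot 2 (MeasureTheory.volume.restrict (Set.Icc (0:ℝ) T)))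
    (huL2 : MeasureTheory.MemLp u 2 (MeasureTheory.volume.restrict (Set.Icc (0:ℝ) T)))
    (hAC : ∀ t ∈ Set.Icc (0:ℝ) T, ∀ i, x t i = x 0 i + ∫ s in (0:ℝ)..t, xdot s i)
    (As : Matrix (Fin n) (Fin n) ℝ) (Bs : Matrix (Fin n) (Fin m) ℝ)
    (htrue : (As, Bs) ∈ SigmaCont T xdot x u Q)
    (δ : ℝ) (hδ : 0 < δ) (N : ℕ) (hN : 0 < N) (hTN : T = N * δ)
    (L : ℝ) (hL : 0 ≤ L)
    (K : Matrix (Fin m) (Fin n) ℝ) (P : Matrix (Fin n) (Fin n) ℝ) (β : ℝ)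
    (hP : P.PosDef) (hβ : δ * T * L / 2 < β)
    (hlmi : SampLMI δ N xdot x u Q P K β) :
    (∀ AB ∈ SigmaCont T xdot x u Q ∩ Mset T L xdot x u, negDefQ ((AB.1 + AB.2 * K) * P + P * (AB.1 + AB.2 * K).transpose)) ∧
    (∀ AB ∈ SigmaCont T xdot x u Q ∩ Nset T L xdot x u, negDefQ ((AB.1 + AB.2 * K) * P + P * (AB.1 + AB.2 * K).transpose)) :=
  stmt11_general T hT x xdot u Q hxdotL2 huL2 hAC δ hδ N hTN L K P β hP hβ hlmi
end
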